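/- arXiv:1703.04821 — 3 statements merged into one kernel-verified Lean document; each statement's English description precedes it below -/
import Mathlib

section
/- Let L = S − A on a core D, with S symmetric nonpositive and A antisymmetric, S π₁ = 0, π₁B = B, and ‖ABf‖ ≤ ‖π₂f‖ for f ∈ D. Then for every f ∈ D, |⟨Bf, Lf⟩| ≤ ‖π₂ f‖ · ‖f‖. -/
open RealInnerProductSpace

/-- Let `L = S − A` on a core `D`, with `S` symmetric nonpositive and `A` antisymmetric,
`S π₁ = 0`, `π₁ B = B`, and `‖A B f‖ ≤ ‖π₂ f‖` for `f ∈ D`.  Then for every `f ∈ D`,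
`|⟨B f, L f⟩| ≤ ‖π₂ f‖ ‖f‖`. -/
theorem abs_inner_B_L_le
    {H : Type*} [NormedAddCommGroup H] [InnerProductSpace ℝ H] [CompleteSpace H]
    (π₁ π₂ : H →L[ℝ] H)
    (hsum : ∀ f : H, π₁ f + π₂ f = f)
    (hidem₁ : ∀ f : H, π₁ (π₁ f) = π₁ f) (hidem₂ : ∀ f : H, π₂ (π₂ f) = π₂ f)
    (horth : ∀ f g : H, ⟪π₁ f, π₂ g⟫ = 0)
    (D : Submodule ℝ H)
    (S A : H →ₗ[ℝ] H) (B : H →L[ℝ] H)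
    -- `S` is symmetric and nonpositive on `D`
    (hS_symm : ∀ f ∈ D, ∀ g ∈ D, ⟪S f, g⟫ = ⟪f, S g⟫)
    (hS_nonpos : ∀ f ∈ D, ⟪S f, f⟫ ≤ 0)
    -- `A` is antisymmetric on `D`
    (hA_skew : ∀ f ∈ D, ∀ g ∈ D, ⟪A f, g⟫ = -⟪f, A g⟫)
    -- `S π₁ = 0`, `π₁ B = B`
    (hSπ₁ : ∀ f : H, S (π₁ f) = 0)
    (hπ₁B : ∀ f : H, π₁ (B f) = B f)
    -- `B` maps into the core, and `‖A B f‖ ≤ ‖π₂ f‖` for `f ∈ D`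
    (hBD : ∀ f ∈ D, B f ∈ D)
    (hAB : ∀ f ∈ D, ‖A (B f)‖ ≤ ‖π₂ f‖) :
    -- `|⟨B f, L f⟩| ≤ ‖π₂ f‖ ⬝ ‖f‖` for `L = S - A`
    ∀ f ∈ D, |⟪B f, S f - A f⟫| ≤ ‖π₂ f‖ * ‖f‖ := by
  intro f hf
  have hSB : S (B f) = 0 := by rw [← hπ₁B f, hSπ₁]
  have h1 : ⟪B f, S f⟫ = 0 := by
    rw [← hS_symm (B f) (hBD f hf) f hf, hSB, inner_zero_left]
  have h2 : ⟪B f, A f⟫ = -⟪A (B f), f⟫ := by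
    linarith [hA_skew (B f) (hBD f hf) f hf]
  have h3 : ⟪B f, S f - A f⟫ = ⟪A (B f), f⟫ := by
    rw [inner_sub_right, h1, h2]; ring
  rw [h3]
  calc |⟪A (B f), f⟫| ≤ ‖A (B f)‖ * ‖f‖ := abs_real_inner_le_norm _ _
    _ ≤ ‖π₂ f‖ * ‖f‖ := by
        exact mul_le_mul_of_nonneg_right (hAB f hf) (norm_nonneg _)
end

section
/- Under the weak Poincaré inequality ‖f‖² ≤ α(r)‖A₀f‖² + rΨ₀(f) (α decreasing, Ψ₀ decreasing along the semigroup e^{−tA₀*A₀}), for G := A₀*A₀ one has for all r > 0 and f ∈ D(A₀): ‖f‖² ≤ (1 + α(r)) ⟨(I+G)⁻¹ G f, f⟩ + r Ψ₀(f). -/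
open LinearPMap RealInnerProductSpace MeasureTheory

/-!
Along the semigroup, `u t = ‖P t f‖²` has `u' = -2 ‖A₀ (P t f)‖²`, so the weak Poincaré
inequality applied to `P t f` (together with `Ψ₀ (P t f) ≤ Ψ₀ f`) is the differential inequality
`u - r Ψ₀ f ≤ -(α r / 2) u'`. Grönwall gives `u t - r Ψ₀ f ≤ e^{-2t/α r} (‖f‖² - r Ψ₀ f)`, and as
`⟪P s f, f⟫ = u (s / 2)` by symmetry, `⟪f - P s f, f⟫ ≥ (‖f‖² - r Ψ₀ f)(1 - e^{-s/α r})`.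
Integrating against `e^{-s} ds` with `∫₀^∞ (1 - e^{-s/a}) e^{-s} ds = 1 / (1 + a)` gives the claim.
-/

open Real Set

theorem sub_le_exp_neg_mul_mul_sub_of_deriv_le {u : ℝ → ℝ} {c k : ℝ}
    (hu : ∀ t, 0 ≤ t → DifferentiableAt ℝ u t)
    (hineq : ∀ t, 0 ≤ t → deriv u t ≤ -c * (u t - k)) {t : ℝ} (ht : 0 ≤ t) :
    u t - k ≤ exp (-c * t) * (u 0 - k) := by
  set g : ℝ → ℝ := fun s => exp (c * s) * (u s - k)
  have hg : ∀ s, 0 ≤ s →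
      HasDerivAt g (exp (c * s) * c * (u s - k) + exp (c * s) * deriv u s) s :=
    fun s hs => (((hasDerivAt_id s).const_mul c).exp.congr_deriv (by simp)).mul
      ((hu s hs).hasDerivAt.sub_const k)
  have hg_anti : AntitoneOn g (Ici 0) := by
    refine antitoneOn_of_hasDerivWithinAt_nonpos (convex_Ici 0)
      (fun s hs => (hg s hs).continuousAt.continuousWithinAt)
      (fun s hs => (hg s (interior_subset hs)).hasDerivWithinAt) fun s hs => ?_
    have := hineq s (interior_subset hs)
    nlinarith [exp_pos (c * s)]
  calc u t - k = exp (-c * t) * g t := by simp [g, ← mul_assoc, ← exp_add]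
    _ ≤ exp (-c * t) * g 0 := by gcongr; exact hg_anti self_mem_Ici ht ht
    _ = exp (-c * t) * (u 0 - k) := by simp [g]

theorem one_sub_exp_neg_div_mul_exp_neg (a s : ℝ) :
    (1 - exp (-s / a)) * exp (-s) = exp (-s) - exp (-(1 + a⁻¹) * s) := by
  rw [sub_mul, one_mul, ← exp_add]
  ring_nf

theorem integrableOn_one_sub_exp_neg_div_mul_exp_neg {a : ℝ} (ha : 0 < a) :
    IntegrableOn (fun s => (1 - exp (-s / a)) * exp (-s)) (Ioi 0) := by
  simp_rw [one_sub_exp_neg_div_mul_exp_neg]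
  exact (integrableOn_exp_neg_Ioi 0).sub (exp_neg_integrableOn_Ioi 0 (by positivity))

theorem integral_one_sub_exp_neg_div_mul_exp_neg {a : ℝ} (ha : 0 < a) :
    ∫ s in Ioi 0, (1 - exp (-s / a)) * exp (-s) = 1 / (1 + a) := by
  simp_rw [one_sub_exp_neg_div_mul_exp_neg]
  have hb : 0 < 1 + a⁻¹ := by positivity
  rw [integral_sub (integrableOn_exp_neg_Ioi 0) (exp_neg_integrableOn_Ioi 0 hb),
    integral_exp_neg_Ioi_zero, integral_exp_mul_Ioi (neg_neg_of_pos hb) 0, mul_zero, exp_zero]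
  field_simp
  ring

theorem div_one_add_le_integral_mul_exp_neg {g : ℝ → ℝ} {a c : ℝ} (ha : 0 < a)
    (hg : IntegrableOn (fun s => g s * exp (-s)) (Ioi 0))
    (hlow : ∀ s > 0, c * (1 - exp (-s / a)) ≤ g s) :
    c / (1 + a) ≤ ∫ s in Ioi 0, g s * exp (-s) := by
  calc c / (1 + a) = ∫ s in Ioi 0, c * ((1 - exp (-s / a)) * exp (-s)) := by
        rw [integral_const_mul, integral_one_sub_exp_neg_div_mul_exp_neg ha, mul_one_div]
    _ ≤ ∫ s in Ioi 0, g s * exp (-s) :=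
        setIntegral_mono_on ((integrableOn_one_sub_exp_neg_div_mul_exp_neg ha).const_mul c) hg
          measurableSet_Ioi fun s hs => by
            rw [← mul_assoc]
            exact mul_le_mul_of_nonneg_right (hlow s hs) (exp_pos _).le

section Semigroup

variable {H : Type*} [NormedAddCommGroup H] [InnerProductSpace ℝ H] {P : ℝ → H →L[ℝ] H}

theorem inner_apply_self_eq_norm_sq_apply_half
    (hPsemi : ∀ s t : ℝ, 0 ≤ s → 0 ≤ t → P (s + t) = (P s).comp (P t))
    (hPsym : ∀ t : ℝ, 0 ≤ t → ∀ f g : H, ⟪P t f, g⟫ = ⟪f, P t g⟫)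
    {s : ℝ} (hs : 0 ≤ s) (f : H) :
    ⟪P s f, f⟫ = ‖P (s / 2) f‖ ^ 2 := by
  have hs2 : 0 ≤ s / 2 := by linarith
  conv_lhs => rw [← add_halves s, hPsemi _ _ hs2 hs2, ContinuousLinearMap.comp_apply]
  rw [hPsym _ hs2, real_inner_self_eq_norm_sq]

variable {A : H →ₗ.[ℝ] H} {f : H}

theorem norm_sq_apply_le_norm_sq (hP0 : P 0 = ContinuousLinearMap.id ℝ H)
    (hdom : ∀ t : ℝ, 0 ≤ t → P t f ∈ A.domain)
    (hderiv : ∀ (t : ℝ) (ht : 0 ≤ t),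
      HasDerivAt (fun s => ‖P s f‖ ^ 2) (-2 * ‖A ⟨P t f, hdom t ht⟩‖ ^ 2) t)
    {t : ℝ} (ht : 0 ≤ t) : ‖P t f‖ ^ 2 ≤ ‖f‖ ^ 2 := by
  have hanti : AntitoneOn (fun s => ‖P s f‖ ^ 2) (Ici 0) :=
    antitoneOn_of_deriv_nonpos (convex_Ici 0)
      (fun s hs => (hderiv s hs).continuousAt.continuousWithinAt)
      (fun s hs => (hderiv s (interior_subset hs)).differentiableAt.differentiableWithinAt)
      fun s hs => by
        rw [(hderiv s (interior_subset hs)).deriv]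
        exact mul_nonpos_of_nonpos_of_nonneg (by norm_num) (sq_nonneg _)
  simpa [hP0] using hanti self_mem_Ici ht ht

theorem norm_sq_apply_sub_le_exp_mul {Ψ : H → ℝ} {a : ℝ} (ha : 0 < a)
    (hP0 : P 0 = ContinuousLinearMap.id ℝ H) (hdom : ∀ t : ℝ, 0 ≤ t → P t f ∈ A.domain)
    (hderiv : ∀ (t : ℝ) (ht : 0 ≤ t),
      HasDerivAt (fun s => ‖P s f‖ ^ 2) (-2 * ‖A ⟨P t f, hdom t ht⟩‖ ^ 2) t)
    (hWP : ∀ (g : H) (hg : g ∈ A.domain), ‖g‖ ^ 2 ≤ a * ‖A ⟨g, hg⟩‖ ^ 2 + Ψ g)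
    (hΨP : ∀ t : ℝ, 0 ≤ t → Ψ (P t f) ≤ Ψ f) {t : ℝ} (ht : 0 ≤ t) :
    ‖P t f‖ ^ 2 - Ψ f ≤ exp (-(2 / a) * t) * (‖f‖ ^ 2 - Ψ f) := by
  have hineq : ∀ s, 0 ≤ s →
      deriv (fun s => ‖P s f‖ ^ 2) s ≤ -(2 / a) * (‖P s f‖ ^ 2 - Ψ f) := by
    intro s hs
    rw [(hderiv s hs).deriv]
    have := hWP _ (hdom s hs)
    have := hΨP s hs
    rw [neg_mul, neg_mul, neg_le_neg_iff, div_mul_eq_mul_div, div_le_iff₀ ha]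
    linarith
  simpa [hP0] using sub_le_exp_neg_mul_mul_sub_of_deriv_le
    (fun s hs => (hderiv s hs).differentiableAt) hineq ht

theorem mul_one_sub_exp_le_inner_sub_apply {Ψ : H → ℝ} {a : ℝ} (ha : 0 < a)
    (hP0 : P 0 = ContinuousLinearMap.id ℝ H)
    (hPsemi : ∀ s t : ℝ, 0 ≤ s → 0 ≤ t → P (s + t) = (P s).comp (P t))
    (hPsym : ∀ t : ℝ, 0 ≤ t → ∀ f g : H, ⟪P t f, g⟫ = ⟪f, P t g⟫)
    (hdom : ∀ t : ℝ, 0 ≤ t → P t f ∈ A.domain)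
    (hderiv : ∀ (t : ℝ) (ht : 0 ≤ t),
      HasDerivAt (fun s => ‖P s f‖ ^ 2) (-2 * ‖A ⟨P t f, hdom t ht⟩‖ ^ 2) t)
    (hWP : ∀ (g : H) (hg : g ∈ A.domain), ‖g‖ ^ 2 ≤ a * ‖A ⟨g, hg⟩‖ ^ 2 + Ψ g)
    (hΨP : ∀ t : ℝ, 0 ≤ t → Ψ (P t f) ≤ Ψ f) {s : ℝ} (hs : 0 ≤ s) :
    (‖f‖ ^ 2 - Ψ f) * (1 - exp (-s / a)) ≤ ⟪f - P s f, f⟫ := by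
  have hdecay := norm_sq_apply_sub_le_exp_mul ha hP0 hdom hderiv hWP hΨP
    (t := s / 2) (by linarith)
  rw [show -(2 / a) * (s / 2) = -s / a by field_simp] at hdecay
  rw [inner_sub_left, real_inner_self_eq_norm_sq,
    inner_apply_self_eq_norm_sq_apply_half hPsemi hPsym hs]
  linarith

theorem integrableOn_inner_sub_apply_mul_exp_neg (hP0 : P 0 = ContinuousLinearMap.id ℝ H)
    (hPsemi : ∀ s t : ℝ, 0 ≤ s → 0 ≤ t → P (s + t) = (P s).comp (P t))
    (hPsym : ∀ t : ℝ, 0 ≤ t → ∀ f g : H, ⟪P t f, g⟫ = ⟪f, P t g⟫)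
    (hdom : ∀ t : ℝ, 0 ≤ t → P t f ∈ A.domain)
    (hderiv : ∀ (t : ℝ) (ht : 0 ≤ t),
      HasDerivAt (fun s => ‖P s f‖ ^ 2) (-2 * ‖A ⟨P t f, hdom t ht⟩‖ ^ 2) t) :
    IntegrableOn (fun s => ⟪f - P s f, f⟫ * exp (-s)) (Ioi 0) := by
  have hform : EqOn (fun s => ⟪f - P s f, f⟫) (fun s => ‖f‖ ^ 2 - ‖P (s / 2) f‖ ^ 2) (Ioi 0) :=
    fun s hs => by
      simp only [inner_sub_left, real_inner_self_eq_norm_sq,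
        inner_apply_self_eq_norm_sq_apply_half hPsemi hPsym (le_of_lt hs)]
  have hcont : ContinuousOn (fun s => ⟪f - P s f, f⟫) (Ioi 0) := by
    refine ContinuousOn.congr (fun s hs => ?_) hform
    have hs2 : 0 ≤ s / 2 := by linarith [mem_Ioi.1 hs]
    exact (continuousAt_const.sub (ContinuousAt.comp (f := fun s : ℝ => s / 2)
      (hderiv _ hs2).continuousAt (continuousAt_id.div_const 2))).continuousWithinAt
  refine (integrableOn_exp_neg_Ioi 0).bdd_mul (c := ‖f‖ ^ 2)
    (hcont.aestronglyMeasurable measurableSet_Ioi) ?_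
  refine (ae_restrict_iff' measurableSet_Ioi).2 (Filter.Eventually.of_forall fun s hs => ?_)
  have hs2 : 0 ≤ s / 2 := by linarith [mem_Ioi.1 hs]
  have := norm_sq_apply_le_norm_sq hP0 hdom hderiv hs2
  rw [show ⟪f - P s f, f⟫ = _ from hform hs, Real.norm_eq_abs, abs_le]
  constructor <;> nlinarith [sq_nonneg ‖P (s / 2) f‖, sq_nonneg ‖f‖]

end Semigroup

theorem weak_poincare_resolvent_form_general
    {H₀ : Type*} [NormedAddCommGroup H₀] [InnerProductSpace ℝ H₀]
    (A₀ : H₀ →ₗ.[ℝ] H₀)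
    (P : ℝ → H₀ →L[ℝ] H₀)
    (hP0 : P 0 = ContinuousLinearMap.id ℝ H₀)
    (hPsemi : ∀ s t : ℝ, 0 ≤ s → 0 ≤ t → P (s + t) = (P s).comp (P t))
    (hPsym : ∀ t : ℝ, 0 ≤ t → ∀ f g : H₀, ⟪P t f, g⟫ = ⟪f, P t g⟫)
    (hPdom : ∀ f ∈ A₀.domain, ∀ t : ℝ, 0 ≤ t → P t f ∈ A₀.domain)
    (hderiv : ∀ (f : H₀) (hf : f ∈ A₀.domain) (t : ℝ) (ht : 0 ≤ t),
      HasDerivAt (fun s => ‖P s f‖ ^ 2)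
        (-2 * ‖A₀ ⟨P t f, hPdom f hf t ht⟩‖ ^ 2) t)
    (Ψ₀ : H₀ → ℝ)
    (hΨP : ∀ (f : H₀) (t : ℝ), 0 ≤ t → Ψ₀ (P t f) ≤ Ψ₀ f)
    (α : ℝ → ℝ) (hα_pos : ∀ r > 0, 0 < α r)
    (hWP : ∀ r > 0, ∀ (f : H₀) (hf : f ∈ A₀.domain),
      ‖f‖ ^ 2 ≤ α r * ‖A₀ ⟨f, hf⟩‖ ^ 2 + r * Ψ₀ f)
    -- `JG = (I+G)⁻¹ G` for `G = A₀*A₀`, characterized by Bochner subordination with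
    -- `ν(ds) = e^{−s} ds`
    (JG : H₀ →L[ℝ] H₀)
    (hJG : ∀ f : H₀, ⟪JG f, f⟫ =
        ∫ s in Set.Ioi (0 : ℝ), ⟪f - P s f, f⟫ * Real.exp (-s)) :
    ∀ r > 0, ∀ f ∈ A₀.domain,
      ‖f‖ ^ 2 ≤ (1 + α r) * ⟪JG f, f⟫ + r * Ψ₀ f := by
  intro r hr f hf
  have ha := hα_pos r hr
  have hΨ : ∀ t : ℝ, 0 ≤ t → r * Ψ₀ (P t f) ≤ r * Ψ₀ f := fun t ht =>
    mul_le_mul_of_nonneg_left (hΨP f t ht) hr.le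
  have hbound : (‖f‖ ^ 2 - r * Ψ₀ f) / (1 + α r) ≤ ⟪JG f, f⟫ := by
    rw [hJG f]
    exact div_one_add_le_integral_mul_exp_neg ha
      (integrableOn_inner_sub_apply_mul_exp_neg hP0 hPsemi hPsym (hPdom f hf) (hderiv f hf))
      fun s hs => mul_one_sub_exp_le_inner_sub_apply ha hP0 hPsemi hPsym (hPdom f hf)
        (hderiv f hf) (hWP r hr) hΨ (le_of_lt hs)
  rw [div_le_iff₀ (by positivity)] at hbound
  linarith

/-- Under the weak Poincaré inequality `‖f‖² ≤ α(r)‖A₀ f‖² + r Ψ₀(f)` (`α` decreasing, `Ψ₀`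
decreasing along the semigroup `e^{−t A₀*A₀}`), for `G := A₀*A₀` one has
`‖f‖² ≤ (1 + α(r)) ⟨(I+G)⁻¹ G f, f⟩ + r Ψ₀(f)` for all `r > 0` and `f ∈ D(A₀)`.
This is the special case `ν(ds) = e^{−s} ds`, `φ_ν(s) = s/(1+s)`, where by subordination
`⟨(I+G)⁻¹ G f, f⟩ = ∫₀^∞ ⟨f − P⁰_s f, f⟩ e^{−s} ds`. -/
theorem weak_poincare_resolvent_form
    {H₀ : Type*} [NormedAddCommGroup H₀] [InnerProductSpace ℝ H₀] [CompleteSpace H₀]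
    (A₀ : H₀ →ₗ.[ℝ] H₀) (hdense : Dense (A₀.domain : Set H₀))
    (hclosed : IsClosed (A₀.graph : Set (H₀ × H₀)))
    (P : ℝ → H₀ →L[ℝ] H₀)
    (hP0 : P 0 = ContinuousLinearMap.id ℝ H₀)
    (hPsemi : ∀ s t : ℝ, 0 ≤ s → 0 ≤ t → P (s + t) = (P s).comp (P t))
    (hPcontr : ∀ t : ℝ, 0 ≤ t → ‖P t‖ ≤ 1)
    (hPsym : ∀ t : ℝ, 0 ≤ t → ∀ f g : H₀, ⟪P t f, g⟫ = ⟪f, P t g⟫)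
    (hPdom : ∀ f ∈ A₀.domain, ∀ t : ℝ, 0 ≤ t → P t f ∈ A₀.domain)
    (hderiv : ∀ (f : H₀) (hf : f ∈ A₀.domain) (t : ℝ) (ht : 0 ≤ t),
      HasDerivAt (fun s => ‖P s f‖ ^ 2)
        (-2 * ‖A₀ ⟨P t f, hPdom f hf t ht⟩‖ ^ 2) t)
    (Ψ₀ : H₀ → ℝ) (hΨ₀ : ∀ f : H₀, 0 ≤ Ψ₀ f)
    (hΨP : ∀ (f : H₀) (t : ℝ), 0 ≤ t → Ψ₀ (P t f) ≤ Ψ₀ f)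
    (α : ℝ → ℝ) (hα_pos : ∀ r > 0, 0 < α r) (hα_anti : AntitoneOn α (Set.Ioi 0))
    (hWP : ∀ r > 0, ∀ (f : H₀) (hf : f ∈ A₀.domain),
      ‖f‖ ^ 2 ≤ α r * ‖A₀ ⟨f, hf⟩‖ ^ 2 + r * Ψ₀ f)
    -- `JG = (I+G)⁻¹ G` for `G = A₀*A₀`, characterized by Bochner subordination with
    -- `ν(ds) = e^{−s} ds`
    (JG : H₀ →L[ℝ] H₀)
    (hJG : ∀ f : H₀, ⟪JG f, f⟫ =
        ∫ s in Set.Ioi (0 : ℝ), ⟪f - P s f, f⟫ * Real.exp (-s)) :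
    ∀ r > 0, ∀ f ∈ A₀.domain,
      ‖f‖ ^ 2 ≤ (1 + α r) * ⟪JG f, f⟫ + r * Ψ₀ f :=
  weak_poincare_resolvent_form_general A₀ P hP0 hPsemi hPsym hPdom hderiv Ψ₀ hΨP α hα_pos hWP JG hJG
end

section
/- Let Φ ∈ C³([0,∞)) be increasing with Φ' > 0 and V₂(y) = Φ(|y|²) on ℝ^{d₂}. Define the Ornstein–Uhlenbeck-type operator S = Δ − ⟨∇V₂, ∇·⟩ on ℝ^{d₂}. Then for any matrix Q and any smooth g on ℝ^{d₁}, S⟨Q∇V₂(y), ∇g(x)⟩ = 2H(|y|²)⟨Q∇V₂(y), ∇g(x)⟩, where H(r) := (2rΦ'''(r) + (d₂+2)Φ''(r))/Φ'(r) − Φ'(r) − 2rΦ''(r). -/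
open RealInnerProductSpace

noncomputable section OUAux

variable {n : ℕ}

lemma ou_aux_nsq (y : EuclideanSpace ℝ (Fin n)) :
    HasFDerivAt (fun z : EuclideanSpace ℝ (Fin n) => ‖z‖ ^ 2) ((2:ℝ) • innerSL ℝ y) y := by
  have := (hasStrictFDerivAt_norm_sq y).hasFDerivAt
  exact this.congr_fderiv (by ext v; simp [two_smul])

lemma ou_aux_comp (ψ : ℝ → ℝ) (y : EuclideanSpace ℝ (Fin n))
    (hψ : DifferentiableAt ℝ ψ (‖y‖ ^ 2)) :
    HasFDerivAt (fun z : EuclideanSpace ℝ (Fin n) => ψ (‖z‖ ^ 2))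
      (deriv ψ (‖y‖ ^ 2) • ((2:ℝ) • innerSL ℝ y)) y :=
  (hψ.hasDerivAt).comp_hasFDerivAt y (ou_aux_nsq y)

lemma ou_hasFDerivAt_P (ψ : ℝ → ℝ) (b y : EuclideanSpace ℝ (Fin n))
    (hψ : DifferentiableAt ℝ ψ (‖y‖ ^ 2)) :
    HasFDerivAt (fun z : EuclideanSpace ℝ (Fin n) => ψ (‖z‖ ^ 2) * ⟪b, z⟫)
      (ψ (‖y‖ ^ 2) • (innerSL ℝ b) +
        ⟪b, y⟫ • (deriv ψ (‖y‖ ^ 2) • ((2:ℝ) • innerSL ℝ y))) y :=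
  (ou_aux_comp ψ y hψ).mul ((innerSL ℝ b).hasFDerivAt)

lemma ou_fderiv_P_apply (ψ : ℝ → ℝ) (b y v : EuclideanSpace ℝ (Fin n))
    (hψ : DifferentiableAt ℝ ψ (‖y‖ ^ 2)) :
    fderiv ℝ (fun z : EuclideanSpace ℝ (Fin n) => ψ (‖z‖ ^ 2) * ⟪b, z⟫) y v
      = ψ (‖y‖ ^ 2) * ⟪b, v⟫ + ⟪b, y⟫ * (deriv ψ (‖y‖ ^ 2) * (2 * ⟪v, y⟫)) := by
  rw [(ou_hasFDerivAt_P ψ b y hψ).fderiv]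
  simp [real_inner_comm y v]

lemma ou_gradP (ψ : ℝ → ℝ) (b y : EuclideanSpace ℝ (Fin n))
    (hψ : DifferentiableAt ℝ ψ (‖y‖ ^ 2)) :
    HasGradientAt (fun z : EuclideanSpace ℝ (Fin n) => ψ (‖z‖ ^ 2) * ⟪b, z⟫)
      (ψ (‖y‖ ^ 2) • b + (⟪b, y⟫ * (2 * deriv ψ (‖y‖ ^ 2))) • y) y := by
  rw [hasGradientAt_iff_hasFDerivAt]
  have heq : (InnerProductSpace.toDual ℝ (EuclideanSpace ℝ (Fin n)))
      (ψ (‖y‖ ^ 2) • b + (⟪b, y⟫ * (2 * deriv ψ (‖y‖ ^ 2))) • y)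
      = ψ (‖y‖ ^ 2) • (innerSL ℝ b) +
        ⟪b, y⟫ • (deriv ψ (‖y‖ ^ 2) • ((2:ℝ) • innerSL ℝ y)) := by
    ext v
    simp [InnerProductSpace.toDual_apply_apply, inner_add_left, real_inner_smul_left]
    ring
  rw [heq]
  exact ou_hasFDerivAt_P ψ b y hψ

lemma ou_gradNsq (Φ : ℝ → ℝ) (y : EuclideanSpace ℝ (Fin n))
    (hΦ : DifferentiableAt ℝ Φ (‖y‖ ^ 2)) :
    HasGradientAt (fun z : EuclideanSpace ℝ (Fin n) => Φ (‖z‖ ^ 2))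
      ((2 * deriv Φ (‖y‖ ^ 2)) • y) y := by
  rw [hasGradientAt_iff_hasFDerivAt]
  have heq : (InnerProductSpace.toDual ℝ (EuclideanSpace ℝ (Fin n)))
      ((2 * deriv Φ (‖y‖ ^ 2)) • y)
      = deriv Φ (‖y‖ ^ 2) • ((2:ℝ) • innerSL ℝ y) := by
    ext v
    simp [InnerProductSpace.toDual_apply_apply, real_inner_smul_left]
    ring
  rw [heq]
  exact ou_aux_comp Φ y hΦ

end OUAux

/-- The Laplacian of a real function on Euclidean space: the sum of the second partial
derivatives along the standard orthonormal basis. -/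
noncomputable def eLaplacian {n : ℕ} (f : EuclideanSpace ℝ (Fin n) → ℝ)
    (x : EuclideanSpace ℝ (Fin n)) : ℝ :=
  ∑ i : Fin n, fderiv ℝ (fun y => fderiv ℝ f y (EuclideanSpace.single i 1)) x
    (EuclideanSpace.single i 1)

/-- Intertwining identity: for `V₂(y) = Φ(|y|²)` with `Φ ∈ C³`, `Φ' > 0`, and the
Ornstein–Uhlenbeck-type operator `S = Δ − ⟨∇V₂, ∇·⟩` acting in `y`, one has for any
`d₁ × d₂` matrix `Q` and any smooth `g` on `ℝ^{d₁}`: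
`S⟨Q∇V₂(y), ∇g(x)⟩ = 2 H(|y|²) ⟨Q∇V₂(y), ∇g(x)⟩`, where
`H(r) = (2rΦ'''(r) + (d₂+2)Φ''(r))/Φ'(r) − Φ'(r) − 2rΦ''(r)`. -/
theorem ou_intertwining_identity {d₁ d₂ : ℕ}
    (Φ : ℝ → ℝ) (hΦ : ContDiff ℝ 3 Φ) (hΦ' : ∀ r : ℝ, 0 ≤ r → 0 < deriv Φ r)
    (Q : Matrix (Fin d₁) (Fin d₂) ℝ)
    (g : EuclideanSpace ℝ (Fin d₁) → ℝ) (hg : ContDiff ℝ (⊤ : ℕ∞) g)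
    -- `V₂(y) = Φ(|y|²)`
    (V₂ : EuclideanSpace ℝ (Fin d₂) → ℝ) (hV₂ : ∀ y, V₂ y = Φ (‖y‖ ^ 2))
    -- `F(x, y) = ⟨Q ∇V₂(y), ∇g(x)⟩`
    (F : EuclideanSpace ℝ (Fin d₁) → EuclideanSpace ℝ (Fin d₂) → ℝ)
    (hF : ∀ x y, F x y =
      ⟪(show EuclideanSpace ℝ (Fin d₁) from WithLp.toLp 2 (fun i => ∑ j, Q i j * gradient V₂ y j)),
        gradient g x⟫)
    -- `H` as in the statement
    (Hfun : ℝ → ℝ)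
    (hH : ∀ r : ℝ, Hfun r =
      (2 * r * deriv (deriv (deriv Φ)) r + (d₂ + 2) * deriv (deriv Φ) r) / deriv Φ r
        - deriv Φ r - 2 * r * deriv (deriv Φ) r) :
    ∀ x y, eLaplacian (F x) y - ⟪gradient V₂ y, gradient (F x) y⟫
      = 2 * Hfun (‖y‖ ^ 2) * F x y := by
  intro x y
  set φ := deriv Φ with hφdef
  -- regularity
  have hΦ3 : ContDiff ℝ (2+1) Φ := by norm_num; exact hΦ
  have h2 : ContDiff ℝ 2 φ := (contDiff_succ_iff_deriv.mp hΦ3).2.2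
  have h21 : ContDiff ℝ (1+1) φ := by norm_num; exact h2
  have h1 : ContDiff ℝ 1 (deriv φ) := (contDiff_succ_iff_deriv.mp h21).2.2
  have hΦd : Differentiable ℝ Φ := hΦ3.differentiable (by norm_num)
  have hdφ : ∀ r : ℝ, DifferentiableAt ℝ φ r :=
    fun r => (h2.differentiable (by norm_num)).differentiableAt
  have hdφ' : ∀ r : ℝ, DifferentiableAt ℝ (deriv φ) r :=
    fun r => (h1.differentiable (by norm_num)).differentiableAt
  -- gradient of V₂
  have hV2f : V₂ = fun z : EuclideanSpace ℝ (Fin d₂) => Φ (‖z‖ ^ 2) := funext hV₂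
  have hgradV₂ : ∀ z : EuclideanSpace ℝ (Fin d₂), gradient V₂ z = (2 * φ (‖z‖ ^ 2)) • z := by
    intro z
    rw [hV2f]
    exact (ou_gradNsq Φ z (hΦd _)).gradient
  -- the fixed vector c
  set a := gradient g x with ha
  set c : EuclideanSpace ℝ (Fin d₂) := WithLp.toLp 2 (fun j => 2 * ∑ i, Q i j * a i) with hc
  have hFx : F x = fun z : EuclideanSpace ℝ (Fin d₂) => φ (‖z‖ ^ 2) * ⟪c, z⟫ := by
    funext z
    rw [hF x z]
    simp only [hgradV₂ z, PiLp.smul_apply, smul_eq_mul, PiLp.inner_apply,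
      RCLike.inner_apply, conj_trivial, hc]
    simp only [Finset.mul_sum, Finset.sum_mul]
    rw [Finset.sum_comm]
    exact Finset.sum_congr rfl fun j _ => Finset.sum_congr rfl fun i _ => by ring
  rw [hFx]
  -- the gradient term
  have hgP := (ou_gradP φ c y (hdφ _)).gradient
  rw [hgP, hgradV₂ y]
  have hr0 : (0:ℝ) ≤ ‖y‖ ^ 2 := by positivity
  -- inner product of the two gradients
  have hinner : ⟪(2 * φ (‖y‖ ^ 2)) • y,
      φ (‖y‖ ^ 2) • c + (⟪c, y⟫ * (2 * deriv φ (‖y‖ ^ 2))) • y⟫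
      = 2 * φ (‖y‖ ^ 2) * (φ (‖y‖ ^ 2) * ⟪c, y⟫)
        + 2 * φ (‖y‖ ^ 2) * (⟪c, y⟫ * (2 * deriv φ (‖y‖ ^ 2))) * ‖y‖ ^ 2 := by
    rw [inner_add_right, real_inner_smul_left, real_inner_smul_left,
      real_inner_smul_right, real_inner_smul_right, real_inner_self_eq_norm_sq,
      real_inner_comm y c]
    ring
  rw [hinner]
  -- the Laplacian term
  have hlapk : ∀ k : Fin d₂,
      fderiv ℝ (fun z => fderiv ℝ (fun w : EuclideanSpace ℝ (Fin d₂) =>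
          φ (‖w‖ ^ 2) * ⟪c, w⟫) z (EuclideanSpace.single k 1)) y (EuclideanSpace.single k 1)
      = 4 * deriv φ (‖y‖ ^ 2) * (y k * c k)
        + ⟪c, y⟫ * (4 * deriv (deriv φ) (‖y‖ ^ 2) * (y k)^2 + 2 * deriv φ (‖y‖ ^ 2)) := by
    intro k
    set e : EuclideanSpace ℝ (Fin d₂) := EuclideanSpace.single k 1 with he
    have hdk : (fun z => fderiv ℝ (fun w : EuclideanSpace ℝ (Fin d₂) =>
        φ (‖w‖ ^ 2) * ⟪c, w⟫) z e)
        = fun z : EuclideanSpace ℝ (Fin d₂) =>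
            φ (‖z‖ ^ 2) * ⟪c, e⟫ + ⟪c, z⟫ * (deriv φ (‖z‖ ^ 2) * (2 * ⟪e, z⟫)) :=
      funext fun z => ou_fderiv_P_apply φ c z e (hdφ _)
    rw [hdk]
    have hq := ((ou_aux_comp φ y (hdφ _)).mul_const (⟪c, e⟫ : ℝ)).add
      (((innerSL ℝ c).hasFDerivAt (x := y)).mul
        ((ou_aux_comp (deriv φ) y (hdφ' _)).mul
          (((innerSL ℝ e).hasFDerivAt (x := y)).const_mul (2:ℝ))))
    have hq' : HasFDerivAt (fun z : EuclideanSpace ℝ (Fin d₂) =>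
        φ (‖z‖ ^ 2) * ⟪c, e⟫ + ⟪c, z⟫ * (deriv φ (‖z‖ ^ 2) * (2 * ⟪e, z⟫))) _ y := hq
    rw [hq'.fderiv]
    have h1 : ⟪c, e⟫ = c k := by simp [he, EuclideanSpace.inner_single_right]
    have h2 : ⟪e, y⟫ = y k := by simp [he, EuclideanSpace.inner_single_left]
    have h3 : ⟪y, e⟫ = y k := by simp [he, EuclideanSpace.inner_single_right]
    have h4 : ⟪e, e⟫ = (1:ℝ) := by simp [he]
    simp only [ContinuousLinearMap.add_apply, ContinuousLinearMap.coe_smul',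
      Pi.smul_apply, ContinuousLinearMap.smul_apply, innerSL_apply_apply, smul_eq_mul, Pi.mul_apply,
      h1, h2, h3, h4]
    ring
  have hlap : eLaplacian (fun z : EuclideanSpace ℝ (Fin d₂) =>
      φ (‖z‖ ^ 2) * ⟪c, z⟫) y
      = 4 * deriv φ (‖y‖ ^ 2) * ⟪c, y⟫
        + ⟪c, y⟫ * (4 * deriv (deriv φ) (‖y‖ ^ 2) * ‖y‖ ^ 2)
        + (d₂ : ℝ) * (⟪c, y⟫ * (2 * deriv φ (‖y‖ ^ 2))) := by
    rw [eLaplacian]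
    rw [Finset.sum_congr rfl fun k _ => hlapk k]
    have hcy : ∑ k, y k * c k = ⟪c, y⟫ := by
      simp [PiLp.inner_apply, mul_comm]
    have hyy : ∑ k, (y k)^2 = ‖y‖ ^ 2 := by
      rw [← real_inner_self_eq_norm_sq]
      rw [PiLp.inner_apply]
      exact Finset.sum_congr rfl fun k _ => by rw [RCLike.inner_apply, conj_trivial, sq]
    have hsum2 : ∑ k : Fin d₂, (4 * deriv (deriv φ) (‖y‖ ^ 2) * (y k)^2
        + 2 * deriv φ (‖y‖ ^ 2))
        = 4 * deriv (deriv φ) (‖y‖ ^ 2) * ‖y‖ ^ 2 + (d₂ : ℝ) * (2 * deriv φ (‖y‖ ^ 2)) := by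
      rw [Finset.sum_add_distrib, ← Finset.mul_sum, hyy, Finset.sum_const,
        Finset.card_univ, Fintype.card_fin, nsmul_eq_mul]
    rw [Finset.sum_add_distrib, ← Finset.mul_sum, ← Finset.mul_sum, hcy, hsum2]
    ring
  rw [hlap, hH]
  rw [show deriv (deriv (deriv Φ)) = deriv (deriv φ) from by rw [hφdef],
    show deriv (deriv Φ) = deriv φ from by rw [hφdef]]
  have hp : φ (‖y‖ ^ 2) ≠ 0 := ne_of_gt (hΦ' _ hr0)
  field_simp
  ring
end
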